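/- (Proposition 3.2, second-order difference estimate, case k = 0.) There exists a constant c > 0 such that the following holds. Let A be a unital C*-algebra over ℂ and let μ be a finite complex Borel measure on ℝ with ‖f‖_2 := Σ_{i=0}^{2} ∫_ℝ |ξ|^i d|μ|(ξ) < ∞. Then for all self-adjoint X_1, X_2, Y_1, Y_2 ∈ A, ‖f_μ(X_1) − f_μ(X_2) − f_μ(Y_1) + f_μ(Y_2)‖ ≤ c · ‖f‖_2 · ( ‖X_1 − X_2‖·‖X_1 − Y_1‖ + ‖X_1 − X_2‖·‖X_2 − Y_2‖ + ‖X_1 − X_2 − Y_1 + Y_2‖ ). -/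

import Mathlib

open MeasureTheory

/-- `exp(i t X)` in a complex Banach algebra, for `t : ℝ`. -/
noncomputable def uexp {A : Type*} [NormedRing A] [NormedAlgebra ℂ A]
    (t : ℝ) (X : A) : A :=
  NormedSpace.exp ((Complex.I * (t : ℂ)) • X)

/-- `f_μ(X) := ∫_ℝ exp(iξX) dμ(ξ)` (Bochner integral in `A`), for a finite complex
Borel measure `μ` on `ℝ` represented by its total variation `ν = |μ|` together with a
unimodular density `ρ` (so that `dμ = ρ dν`). -/
noncomputable def fmu {A : Type*} [NormedRing A] [NormedAlgebra ℂ A] [CompleteSpace A]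
    (ν : Measure ℝ) (ρ : ℝ → ℂ) (X : A) : A :=
  ∫ ξ, ρ ξ • uexp ξ X ∂ν

/-- The first-derivative formula
`df_μ(X)(Y) = ∫₀¹ ∫_ℝ iξ exp(iαξX) Y exp(i(1−α)ξX) dμ(ξ) dα`. -/
noncomputable def dfmu {A : Type*} [NormedRing A] [NormedAlgebra ℂ A] [CompleteSpace A]
    (ν : Measure ℝ) (ρ : ℝ → ℂ) (X Y : A) : A :=
  ∫ α in (0 : ℝ)..1,
    ∫ ξ, (ρ ξ * (ξ : ℂ) * Complex.I) •
      (uexp (α * ξ) X * Y * uexp ((1 - α) * ξ) X) ∂ν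

/-!
For self-adjoint `X, Y` the path `s ↦ exp(istX) exp(i(1-s)tY)` joins `exp(itY)` to `exp(itX)` and
has derivative `exp(istX) · it(X - Y) · exp(i(1-s)tY)`; as the outer factors are unitary, this
gives `‖exp(itX) - exp(itY)‖ ≤ |t| ‖X - Y‖`. Differentiating the difference of the paths for
`(X₁, X₂)` and `(Y₁, Y₂)`, with `E = it(X₁ - X₂)` and `F = it(Y₁ - Y₂)`, and splitting the
derivative `P₁ E P₂ - Q₁ F Q₂` as `(P₁ - Q₁) E P₂ + Q₁ E (P₂ - Q₂) + Q₁ (E - F) Q₂` bounds the second difference of `exp(it·)` by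
`t² (‖X₁-X₂‖ ‖X₁-Y₁‖ + ‖X₁-X₂‖ ‖X₂-Y₂‖) + |t| ‖X₁-X₂-Y₁+Y₂‖`. Integrating against `|μ|` gives
the estimate with `c = 1`.
-/

open NormedSpace Complex

section Exponential

variable {A : Type*} [NormedRing A] [NormedAlgebra ℂ A]

lemma uexp_eq_exp_smul (t : ℝ) (X : A) : uexp t X = exp (t • I • X) := by
  rw [uexp, mul_smul, Complex.coe_smul, smul_comm]

lemma uexp_zero (X : A) : uexp 0 X = 1 := by
  simp [uexp_eq_exp_smul]

variable [CompleteSpace A]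

lemma hasDerivAt_uexp_mul (X : A) (t s : ℝ) :
    HasDerivAt (fun s : ℝ => uexp (s * t) X) (uexp (s * t) X * (t • I • X)) s := by
  simpa only [uexp_eq_exp_smul, mul_smul] using hasDerivAt_exp_smul_const (t • I • X) s

lemma hasDerivAt_uexp_one_sub_mul (X : A) (t s : ℝ) :
    HasDerivAt (fun s : ℝ => uexp ((1 - s) * t) X) (-((t • I • X) * uexp ((1 - s) * t) X)) s := by
  have h := (hasDerivAt_exp_smul_const' (t • I • X) (1 - s)).scomp s
    ((hasDerivAt_id s).const_sub 1)
  simpa only [uexp_eq_exp_smul, mul_smul, Function.comp_def, neg_one_smul] using h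

lemma continuous_uexp (X : A) : Continuous fun t : ℝ => uexp t X := by
  simpa using continuous_iff_continuousAt.2 fun t => (hasDerivAt_uexp_mul X 1 t).continuousAt

lemma hasDerivAt_uexp_mul_uexp (X Y : A) (t s : ℝ) :
    HasDerivAt (fun s : ℝ => uexp (s * t) X * uexp ((1 - s) * t) Y)
      (uexp (s * t) X * (t • I • (X - Y)) * uexp ((1 - s) * t) Y) s := by
  refine ((hasDerivAt_uexp_mul X t s).mul (hasDerivAt_uexp_one_sub_mul Y t s)).congr_deriv ?_
  rw [smul_sub, smul_sub]
  noncomm_ring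

end Exponential

lemma norm_real_smul_I_smul {A : Type*} [NormedAddCommGroup A] [NormedSpace ℂ A] (t : ℝ) (Z : A) :
    ‖t • I • Z‖ = |t| * ‖Z‖ := by
  rw [norm_smul, norm_smul, Complex.norm_I, one_mul, Real.norm_eq_abs]

lemma abs_mul_le_abs_of_mem_Icc {s : ℝ} (hs : s ∈ Set.Icc 0 1) (t : ℝ) : |s * t| ≤ |t| := by
  rw [abs_mul, abs_of_nonneg hs.1]
  exact mul_le_of_le_one_left (abs_nonneg t) hs.2

lemma mul_mul_sub_mul_mul_eq {R : Type*} [Ring R] (p₁ p₂ q₁ q₂ e f : R) :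
    p₁ * e * p₂ - q₁ * f * q₂ = (p₁ - q₁) * e * p₂ + q₁ * e * (p₂ - q₂) + q₁ * (e - f) * q₂ := by
  noncomm_ring

section CStarAlgebra

variable {A : Type*} [CStarAlgebra A] {X Y X₁ X₂ Y₁ Y₂ : A}

lemma IsSelfAdjoint.uexp_mem_unitary (hX : IsSelfAdjoint X) (t : ℝ) : uexp t X ∈ unitary A := by
  rw [uexp_eq_exp_smul, smul_comm]
  let +nondep : NormedAlgebra ℚ A := .restrictScalars ℚ ℂ A
  exact exp_mem_unitary_of_mem_skewAdjoint
    (((IsSelfAdjoint.all t).smul hX).smul_mem_skewAdjoint conj_I)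

lemma IsSelfAdjoint.norm_uexp_le_one (hX : IsSelfAdjoint X) (t : ℝ) : ‖uexp t X‖ ≤ 1 := by
  nontriviality A
  exact (CStarRing.norm_of_mem_unitary (hX.uexp_mem_unitary t)).le

lemma norm_uexp_mul_mul_uexp (hX : IsSelfAdjoint X) (hY : IsSelfAdjoint Y) (s t : ℝ) (Z : A) :
    ‖uexp s X * Z * uexp t Y‖ = ‖Z‖ := by
  rw [CStarRing.norm_mul_mem_unitary _ (hY.uexp_mem_unitary t),
    CStarRing.norm_mem_unitary_mul _ (hX.uexp_mem_unitary s)]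

lemma norm_uexp_sub_uexp_le (hX : IsSelfAdjoint X) (hY : IsSelfAdjoint Y) (t : ℝ) :
    ‖uexp t X - uexp t Y‖ ≤ |t| * ‖X - Y‖ := by
  have h := norm_image_sub_le_of_norm_deriv_le_segment_01'
    (fun s _ => (hasDerivAt_uexp_mul_uexp X Y t s).hasDerivWithinAt)
    (fun s _ => (norm_uexp_mul_mul_uexp hX hY _ _ _).trans_le (norm_real_smul_I_smul t _).le)
  simpa [uexp_zero] using h

lemma norm_deriv_uexp_second_difference_le (h₁ : IsSelfAdjoint X₁) (h₂ : IsSelfAdjoint X₂)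
    (h₃ : IsSelfAdjoint Y₁) (h₄ : IsSelfAdjoint Y₂) (t : ℝ) {s : ℝ} (hs : s ∈ Set.Icc 0 1) :
    ‖uexp (s * t) X₁ * (t • I • (X₁ - X₂)) * uexp ((1 - s) * t) X₂ -
        uexp (s * t) Y₁ * (t • I • (Y₁ - Y₂)) * uexp ((1 - s) * t) Y₂‖ ≤
      t ^ 2 * (‖X₁ - X₂‖ * ‖X₁ - Y₁‖ + ‖X₁ - X₂‖ * ‖X₂ - Y₂‖) + |t| * ‖X₁ - X₂ - Y₁ + Y₂‖ := by
  set E := t • I • (X₁ - X₂)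
  have hE : ‖E‖ = |t| * ‖X₁ - X₂‖ := norm_real_smul_I_smul t _
  have hEF : E - t • I • (Y₁ - Y₂) = t • I • (X₁ - X₂ - Y₁ + Y₂) := by
    rw [← smul_sub, ← smul_sub]
    congr 2
    abel
  have hP₁ : ‖uexp (s * t) X₁ - uexp (s * t) Y₁‖ ≤ |t| * ‖X₁ - Y₁‖ :=
    (norm_uexp_sub_uexp_le h₁ h₃ _).trans
      (mul_le_mul_of_nonneg_right (abs_mul_le_abs_of_mem_Icc hs t) (norm_nonneg _))
  have hP₂ : ‖uexp ((1 - s) * t) X₂ - uexp ((1 - s) * t) Y₂‖ ≤ |t| * ‖X₂ - Y₂‖ :=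
    (norm_uexp_sub_uexp_le h₂ h₄ _).trans <| mul_le_mul_of_nonneg_right
      (abs_mul_le_abs_of_mem_Icc ⟨sub_nonneg.2 hs.2, sub_le_self 1 hs.1⟩ t) (norm_nonneg _)
  rw [mul_mul_sub_mul_mul_eq, hEF]
  calc _ ≤ ‖(uexp (s * t) X₁ - uexp (s * t) Y₁) * E * uexp ((1 - s) * t) X₂‖ +
          ‖uexp (s * t) Y₁ * E * (uexp ((1 - s) * t) X₂ - uexp ((1 - s) * t) Y₂)‖ +
          ‖uexp (s * t) Y₁ * (t • I • (X₁ - X₂ - Y₁ + Y₂)) * uexp ((1 - s) * t) Y₂‖ :=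
        norm_add₃_le
    _ ≤ ‖uexp (s * t) X₁ - uexp (s * t) Y₁‖ * ‖E‖ +
          ‖E‖ * ‖uexp ((1 - s) * t) X₂ - uexp ((1 - s) * t) Y₂‖ +
          ‖t • I • (X₁ - X₂ - Y₁ + Y₂)‖ := by
        gcongr ?_ + ?_ + ?_
        · rw [CStarRing.norm_mul_mem_unitary _ (h₂.uexp_mem_unitary _)]
          exact norm_mul_le _ _
        · rw [mul_assoc, CStarRing.norm_mem_unitary_mul _ (h₃.uexp_mem_unitary _)]
          exact norm_mul_le _ _
        · exact (norm_uexp_mul_mul_uexp h₃ h₄ _ _ _).le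
    _ ≤ |t| * ‖X₁ - Y₁‖ * (|t| * ‖X₁ - X₂‖) + |t| * ‖X₁ - X₂‖ * (|t| * ‖X₂ - Y₂‖) +
          |t| * ‖X₁ - X₂ - Y₁ + Y₂‖ := by
        rw [hE, norm_real_smul_I_smul]
        gcongr
    _ = _ := by
        rw [← sq_abs t]
        ring

theorem norm_uexp_second_difference_le (h₁ : IsSelfAdjoint X₁) (h₂ : IsSelfAdjoint X₂)
    (h₃ : IsSelfAdjoint Y₁) (h₄ : IsSelfAdjoint Y₂) (t : ℝ) :
    ‖uexp t X₁ - uexp t X₂ - uexp t Y₁ + uexp t Y₂‖ ≤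
      t ^ 2 * (‖X₁ - X₂‖ * ‖X₁ - Y₁‖ + ‖X₁ - X₂‖ * ‖X₂ - Y₂‖) + |t| * ‖X₁ - X₂ - Y₁ + Y₂‖ := by
  have h := norm_image_sub_le_of_norm_deriv_le_segment_01'
    (fun s _ => ((hasDerivAt_uexp_mul_uexp X₁ X₂ t s).sub
      (hasDerivAt_uexp_mul_uexp Y₁ Y₂ t s)).hasDerivWithinAt)
    (fun s hs => norm_deriv_uexp_second_difference_le h₁ h₂ h₃ h₄ t (Set.Ico_subset_Icc_self hs))
  refine le_of_eq_of_le ?_ h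
  simp only [Pi.sub_apply, zero_mul, one_mul, sub_zero, sub_self, uexp_zero, mul_one, one_mul]
  congr 1
  abel

end CStarAlgebra

section Integral

variable {A : Type*} [CStarAlgebra A] {ν : Measure ℝ} [IsFiniteMeasure ν] {ρ : ℝ → ℂ}

lemma integrable_smul_uexp (hρ : AEStronglyMeasurable ρ ν) (hρ₁ : ∀ ξ, ‖ρ ξ‖ ≤ 1) {X : A}
    (hX : IsSelfAdjoint X) : Integrable (fun ξ => ρ ξ • uexp ξ X) ν := by
  refine (integrable_const (1 : ℝ)).mono' (hρ.smul (continuous_uexp X).aestronglyMeasurable) ?_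
  refine .of_forall fun ξ => ?_
  rw [norm_smul]
  exact mul_le_one₀ (hρ₁ ξ) (norm_nonneg _) (hX.norm_uexp_le_one ξ)

lemma fmu_sub_sub_add_eq_integral (hρ : AEStronglyMeasurable ρ ν) (hρ₁ : ∀ ξ, ‖ρ ξ‖ ≤ 1)
    {X₁ X₂ Y₁ Y₂ : A} (h₁ : IsSelfAdjoint X₁) (h₂ : IsSelfAdjoint X₂) (h₃ : IsSelfAdjoint Y₁)
    (h₄ : IsSelfAdjoint Y₂) :
    fmu ν ρ X₁ - fmu ν ρ X₂ - fmu ν ρ Y₁ + fmu ν ρ Y₂ =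
      ∫ ξ, ρ ξ • (uexp ξ X₁ - uexp ξ X₂ - uexp ξ Y₁ + uexp ξ Y₂) ∂ν := by
  have hi := fun {X : A} (hX : IsSelfAdjoint X) => integrable_smul_uexp hρ hρ₁ hX
  simp only [fmu, smul_add, smul_sub]
  rw [integral_add (((hi h₁).sub' (hi h₂)).sub' (hi h₃)) (hi h₄),
    integral_sub ((hi h₁).sub' (hi h₂)) (hi h₃), integral_sub (hi h₁) (hi h₂)]

end Integral

/-- Proposition 3.2, second-order difference estimate, case `k = 0`.
There is a universal constant `c > 0` such that, for every unital C*-algebra `A` over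
`ℂ` and every finite complex Borel measure `μ` on `ℝ` (given by its total variation `ν`
and unimodular density `ρ`) with `‖f‖₂ := ∑_{i=0}^{2} ∫ |ξ|^i d|μ|(ξ) < ∞`, and all
self-adjoint `X₁, X₂, Y₁, Y₂ ∈ A`,
`‖f_μ(X₁) − f_μ(X₂) − f_μ(Y₁) + f_μ(Y₂)‖
  ≤ c ‖f‖₂ (‖X₁−X₂‖ ‖X₁−Y₁‖ + ‖X₁−X₂‖ ‖X₂−Y₂‖ + ‖X₁−X₂−Y₁+Y₂‖)`. -/
theorem fmu_second_order_difference :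
    ∃ c : ℝ, 0 < c ∧
      ∀ (A : Type*) [CStarAlgebra A],
        ∀ (ν : Measure ℝ) [IsFiniteMeasure ν],
          ∀ (ρ : ℝ → ℂ), Measurable ρ → (∀ ξ, ‖ρ ξ‖ = 1) →
            Integrable (fun ξ : ℝ => ξ) ν → Integrable (fun ξ : ℝ => ξ ^ 2) ν →
              ∀ X₁ X₂ Y₁ Y₂ : A, IsSelfAdjoint X₁ → IsSelfAdjoint X₂ →
                IsSelfAdjoint Y₁ → IsSelfAdjoint Y₂ →
                ‖fmu ν ρ X₁ - fmu ν ρ X₂ - fmu ν ρ Y₁ + fmu ν ρ Y₂‖ ≤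
                  c * ((ν Set.univ).toReal + (∫ ξ, |ξ| ∂ν) + ∫ ξ, ξ ^ 2 ∂ν) *
                    (‖X₁ - X₂‖ * ‖X₁ - Y₁‖ + ‖X₁ - X₂‖ * ‖X₂ - Y₂‖ +
                      ‖X₁ - X₂ - Y₁ + Y₂‖) := by
  refine ⟨1, one_pos, fun A _ ν _ ρ hρ hρ₁ hξ hξ₂ X₁ X₂ Y₁ Y₂ h₁ h₂ h₃ h₄ => ?_⟩
  set a := ‖X₁ - X₂‖ * ‖X₁ - Y₁‖ + ‖X₁ - X₂‖ * ‖X₂ - Y₂‖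
  set d := ‖X₁ - X₂ - Y₁ + Y₂‖
  have hweight : Integrable (fun ξ : ℝ => 1 + |ξ| + ξ ^ 2) ν :=
    ((integrable_const 1).fun_add hξ.abs).fun_add hξ₂
  have hpointwise (ξ : ℝ) : ‖ρ ξ • (uexp ξ X₁ - uexp ξ X₂ - uexp ξ Y₁ + uexp ξ Y₂)‖ ≤
      (1 + |ξ| + ξ ^ 2) * (a + d) := by
    rw [norm_smul, hρ₁, one_mul]
    refine (norm_uexp_second_difference_le h₁ h₂ h₃ h₄ ξ).trans ?_
    have : 0 ≤ a := by positivity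
    have : 0 ≤ d := norm_nonneg _
    nlinarith [abs_nonneg ξ, sq_nonneg ξ]
  calc _ = ‖∫ ξ, ρ ξ • (uexp ξ X₁ - uexp ξ X₂ - uexp ξ Y₁ + uexp ξ Y₂) ∂ν‖ := by
        rw [fmu_sub_sub_add_eq_integral hρ.aestronglyMeasurable (fun ξ => (hρ₁ ξ).le) h₁ h₂ h₃ h₄]
    _ ≤ ∫ ξ, (1 + |ξ| + ξ ^ 2) * (a + d) ∂ν :=
        norm_integral_le_of_norm_le (hweight.mul_const _) (.of_forall hpointwise)
    _ = _ := by
        rw [integral_mul_const, integral_add ((integrable_const 1).fun_add hξ.abs) hξ₂,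
          integral_add (integrable_const 1) hξ.abs, integral_const, smul_eq_mul, mul_one,
          measureReal_def, one_mul]
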